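/- Over a field of characteristic zero, the space of primitive elements of the tensor Hopf algebra (T(V), concatenation, unshuffle coproduct) is exactly the free Lie algebra L(V): x satisfies Δx = x⊗1 + 1⊗x if and only if x ∈ L(V). -/

import Mathlib

open TensorProduct

variable (K : Type*) [Field K] [CharZero K]
variable {V : Type*} [AddCommGroup V] [Module K V]

/-- The unshuffle coproduct on the tensor algebra. -/
noncomputable def unshuffle :
    TensorAlgebra K V →ₐ[K] TensorAlgebra K V ⊗[K] TensorAlgebra K V :=
  TensorAlgebra.lift K
    ((Algebra.TensorProduct.includeLeft :
        TensorAlgebra K V →ₐ[K] TensorAlgebra K V ⊗[K] TensorAlgebra K V).toLinearMap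
        ∘ₗ TensorAlgebra.ι K
      + (Algebra.TensorProduct.includeRight :
        TensorAlgebra K V →ₐ[K] TensorAlgebra K V ⊗[K] TensorAlgebra K V).toLinearMap
        ∘ₗ TensorAlgebra.ι K)

attribute [local instance] LieRing.ofAssociativeRing

/-!
Primitive elements form a Lie subalgebra containing `V`, which gives one inclusion. Conversely,
let `ω` be the Dynkin operator `v₁ ⋯ vₙ ↦ ⁅v₁, ⁅v₂, ⋯ ⁅vₙ₋₁, vₙ⁆⋯⁆⁆`, whose values lie in `L(V)`.
The convolution `N = μ ∘ (ω ⊗ id) ∘ Δ` satisfies `N (v y) = v N y + v y`, so it is the Euler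
derivation, multiplying elements of degree `n` by `n`. For primitive `x` we get `N x = ω x ∈ L(V)`.
Since `x` has no constant term, it is a finite sum of eigenvectors of `N` with nonzero eigenvalues,
so `x = q(N) (N x)` for a polynomial `q` interpolating `n ↦ 1/n` on those eigenvalues; as `N` is a
derivation, `L(V)` is stable under `N`, hence `x ∈ L(V)`.
-/

theorem Module.End.mem_of_apply_mem_of_mem_iSup_eigenspace {𝕜 E : Type*} [Field 𝕜]
    [AddCommGroup E] [Module 𝕜 E] {f : Module.End 𝕜 E} {p : Submodule 𝕜 E}
    (hp : p ≤ p.comap f) {s : Finset 𝕜} (hs : 0 ∉ s) {x : E}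
    (hx : x ∈ ⨆ μ ∈ s, f.eigenspace μ) (hfx : f x ∈ p) : x ∈ p := by
  classical
  -- `q(f)` inverts `f` on the sum of the eigenspaces, and is a polynomial in `f`.
  set q := Lagrange.interpolate s id fun μ => μ⁻¹
  have hq : ⨆ μ ∈ s, f.eigenspace μ ≤ LinearMap.ker (Polynomial.aeval f q * f - 1) := by
    refine iSup₂_le fun μ hμ y hy => ?_
    rw [mem_eigenspace_iff] at hy
    have hqμ : q.eval μ = μ⁻¹ := Lagrange.eval_interpolate_at_node _ (Set.injOn_id _) hμ
    have hμ0 : μ ≠ 0 := ne_of_mem_of_not_mem hμ hs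
    simp [hy, aeval_apply_of_mem_apply_eq_smul hy, hqμ, smul_smul, hμ0]
  have hqx : Polynomial.aeval f q (f x) = x := by
    simpa [sub_eq_zero] using hq hx
  rw [← hqx]
  exact Polynomial.aeval_apply_smul_mem_of_le_comap hfx q f hp

theorem LieDerivation.lieSpan_le_comap {R L : Type*} [CommRing R] [LieRing L] [LieAlgebra R L]
    (D : LieDerivation R L L) {s : Set L} (hs : ∀ x ∈ s, D x ∈ LieSubalgebra.lieSpan R L s) :
    (LieSubalgebra.lieSpan R L s).toSubmodule
      ≤ (LieSubalgebra.lieSpan R L s).toSubmodule.comap (D : L →ₗ[R] L) := by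
  intro x hx
  induction hx using LieSubalgebra.lieSpan_induction with
  | mem x hx => exact hs x hx
  | zero => simp
  | add x y _ _ hx hy => simpa using add_mem hx hy
  | smul t x _ hx => simpa using SMulMemClass.smul_mem t hx
  | lie x y hx hy hDx hDy =>
    simp only [Submodule.mem_comap, LieDerivation.coeFn_coe, LieDerivation.apply_lie_eq_add] at *
    exact add_mem (LieSubalgebra.lie_mem _ hx hDy) (LieSubalgebra.lie_mem _ hDx hy)

namespace TensorAlgebra

section CommRing

variable {R M : Type*} [CommRing R] [AddCommGroup M] [Module R M]

@[simp] theorem algebraMapInv_ι (m : M) : algebraMapInv (ι R m) = 0 :=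
  lift_ι_apply _ m

theorem algebraMapInv_eq_zero_of_mem_pow {n : ℕ} (hn : n ≠ 0) {x : TensorAlgebra R M}
    (hx : x ∈ LinearMap.range (ι R : M →ₗ[R] TensorAlgebra R M) ^ n) : algebraMapInv x = 0 := by
  obtain ⟨n, rfl⟩ := Nat.exists_eq_succ_of_ne_zero hn
  rw [pow_succ] at hx
  refine Submodule.mul_induction_on hx (fun a _ b hb => ?_) fun a b ha hb => ?_
  · obtain ⟨m, rfl⟩ := hb
    rw [map_mul, algebraMapInv_ι, mul_zero]
  · rw [map_add, ha, hb, add_zero]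

theorem decompose_zero_eq_algebraMap_algebraMapInv (x : TensorAlgebra R M) :
    (DirectSum.decompose (LinearMap.range (ι R : M →ₗ[R] TensorAlgebra R M) ^ ·) x 0 :
      TensorAlgebra R M) = algebraMap R _ (algebraMapInv x) := by
  induction x using DirectSum.Decomposition.inductionOn
    (LinearMap.range (ι R : M →ₗ[R] TensorAlgebra R M) ^ ·) with
  | zero => simp
  | add x y hx hy => simp [hx, hy]
  | @homogeneous n y =>
    obtain rfl | hn := eq_or_ne n 0
    · obtain ⟨r, hr⟩ := Submodule.mem_one.mp (by simpa only [pow_zero] using y.2)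
      rw [DirectSum.decompose_of_mem_same _ y.2, ← hr, AlgHom.commutes, Algebra.algebraMap_self,
        RingHom.id_apply]
    · rw [DirectSum.decompose_of_mem_ne _ y.2 hn, algebraMapInv_eq_zero_of_mem_pow hn y.2,
        map_zero]

noncomputable def dynkinStep : M →ₗ[R] Module.End R (TensorAlgebra R M × R) where
  toFun m := LinearMap.inl R _ R ∘ₗ
    (LieAlgebra.ad R (TensorAlgebra R M) (ι R m) ∘ₗ LinearMap.fst R _ R
      + LinearMap.toSpanSingleton R _ (ι R m) ∘ₗ LinearMap.snd R _ R)
  map_add' m m' := by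
    ext p <;> simp [smul_add]
  map_smul' c m := by
    ext p <;> simp

@[simp] theorem dynkinStep_apply (m : M) (p : TensorAlgebra R M × R) :
    dynkinStep m p = (⁅ι R m, p.1⁆ + p.2 • ι R m, 0) := by
  simp [dynkinStep, LieAlgebra.ad_apply]

noncomputable def dynkinAction : TensorAlgebra R M →ₐ[R] Module.End R (TensorAlgebra R M × R) :=
  lift R dynkinStep

/-- The Dynkin operator `m₁ ⋯ mₙ ↦ ⁅ι m₁, ⁅ι m₂, ⋯ ⁅ι mₙ₋₁, ι mₙ⁆⋯⁆⁆`, vanishing on scalars.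
It is read off the action of `dynkinAction` on `(0, 1)`: the scalar coordinate lets the last
letter `mₙ` start the nested bracket. -/
noncomputable def dynkin : TensorAlgebra R M →ₗ[R] TensorAlgebra R M :=
  LinearMap.fst R _ R ∘ₗ LinearMap.applyₗ (0, 1) ∘ₗ (dynkinAction (R := R) (M := M)).toLinearMap

theorem dynkinAction_apply_snd (x : TensorAlgebra R M) (p : TensorAlgebra R M × R) :
    (dynkinAction x p).2 = algebraMapInv x * p.2 := by
  induction x using TensorAlgebra.induction generalizing p with
  | algebraMap r => simp [Algebra.algebraMap_eq_smul_one]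
  | ι m => simp [dynkinAction]
  | add x y hx hy => simp [hx, hy, add_mul]
  | mul x y hx hy => rw [map_mul, Module.End.mul_apply, hx, hy, map_mul, mul_assoc]

theorem dynkinAction_apply_zero_one (x : TensorAlgebra R M) :
    dynkinAction x (0, 1) = (dynkin x, algebraMapInv x) :=
  Prod.ext rfl (by simp [dynkinAction_apply_snd])

@[simp] theorem dynkin_algebraMap (r : R) : dynkin (algebraMap R (TensorAlgebra R M) r) = 0 := by
  simp [dynkin, Algebra.algebraMap_eq_smul_one]

@[simp] theorem dynkin_one : dynkin (1 : TensorAlgebra R M) = 0 := by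
  simpa using dynkin_algebraMap (M := M) (1 : R)

theorem dynkin_ι_mul (m : M) (y : TensorAlgebra R M) :
    dynkin (ι R m * y) = ⁅ι R m, dynkin y⁆ + algebraMapInv y • ι R m := by
  have h := dynkinAction_apply_zero_one (ι R m * y)
  rw [map_mul, Module.End.mul_apply, dynkinAction_apply_zero_one, dynkinAction, lift_ι_apply,
    dynkinStep_apply] at h
  exact (congrArg Prod.fst h).symm

theorem dynkin_mem_lieSpan (x : TensorAlgebra R M) :
    dynkin x ∈ LieSubalgebra.lieSpan R (TensorAlgebra R M) (Set.range (ι R)) := by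
  set L := LieSubalgebra.lieSpan R (TensorAlgebra R M) (Set.range (ι R))
  suffices ∀ p : TensorAlgebra R M × R, p.1 ∈ L → (dynkinAction x p).1 ∈ L from
    this (0, 1) L.zero_mem
  induction x using TensorAlgebra.induction with
  | algebraMap r => intro p hp; simpa [Algebra.algebraMap_eq_smul_one] using L.smul_mem r hp
  | ι m =>
    have hm : ι R m ∈ L := LieSubalgebra.subset_lieSpan ⟨m, rfl⟩
    intro p hp
    simpa [dynkinAction] using add_mem (L.lie_mem hm hp) (L.smul_mem p.2 hm)
  | add x y hx hy => intro p hp; simpa using add_mem (hx p hp) (hy p hp)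
  | mul x y hx hy => intro p hp; rw [map_mul]; exact hx _ (hy p hp)

noncomputable def counitLeft : TensorAlgebra R M ⊗[R] TensorAlgebra R M →ₐ[R] TensorAlgebra R M :=
  (Algebra.TensorProduct.lid R _).toAlgHom.comp
    (Algebra.TensorProduct.map algebraMapInv (AlgHom.id R _))

@[simp] theorem counitLeft_tmul (a b : TensorAlgebra R M) :
    counitLeft (a ⊗ₜ[R] b) = algebraMapInv a • b := by
  simp [counitLeft]

end CommRing

section Field

variable {𝕜 W : Type*} [Field 𝕜] [AddCommGroup W] [Module 𝕜 W]

@[simp] theorem unshuffle_ι (w : W) :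
    unshuffle 𝕜 (ι 𝕜 w) = ι 𝕜 w ⊗ₜ[𝕜] 1 + 1 ⊗ₜ[𝕜] ι 𝕜 w := by
  simp [unshuffle]

theorem counitLeft_unshuffle (x : TensorAlgebra 𝕜 W) : counitLeft (unshuffle 𝕜 x) = x := by
  suffices counitLeft.comp (unshuffle 𝕜) = AlgHom.id 𝕜 (TensorAlgebra 𝕜 W) from
    DFunLike.congr_fun this x
  ext w
  simp

noncomputable def primitives : LieSubalgebra 𝕜 (TensorAlgebra 𝕜 W) where
  carrier := {x | unshuffle 𝕜 x = x ⊗ₜ[𝕜] 1 + 1 ⊗ₜ[𝕜] x}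
  add_mem' {a b} ha hb := by
    simp only [Set.mem_ofPred_eq, map_add, add_tmul, tmul_add] at ha hb ⊢
    rw [ha, hb]
    abel
  zero_mem' := by simp
  smul_mem' c a ha := by
    simp only [Set.mem_ofPred_eq] at ha ⊢
    rw [map_smul, ha, smul_add, tmul_smul, smul_tmul']
  lie_mem' {a b} ha hb := by
    simp only [Set.mem_ofPred_eq, Ring.lie_def, map_sub, map_mul] at ha hb ⊢
    rw [ha, hb]
    simp only [mul_add, add_mul, Algebra.TensorProduct.tmul_mul_tmul, one_mul, mul_one, sub_tmul,
      tmul_sub]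
    abel

theorem mem_primitives {x : TensorAlgebra 𝕜 W} :
    x ∈ primitives ↔ unshuffle 𝕜 x = x ⊗ₜ[𝕜] 1 + 1 ⊗ₜ[𝕜] x :=
  Iff.rfl

theorem lieSpan_le_primitives :
    LieSubalgebra.lieSpan 𝕜 (TensorAlgebra 𝕜 W) (Set.range (ι 𝕜)) ≤ primitives :=
  LieSubalgebra.lieSpan_le.mpr <| Set.range_subset_iff.mpr unshuffle_ι

theorem algebraMapInv_eq_zero_of_mem_primitives {x : TensorAlgebra 𝕜 W} (hx : x ∈ primitives) :
    algebraMapInv x = 0 := by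
  have h := counitLeft_unshuffle x
  rw [mem_primitives.mp hx, map_add, counitLeft_tmul, counitLeft_tmul, map_one, one_smul,
    add_eq_right, ← Algebra.algebraMap_eq_smul_one] at h
  exact (algebraMap_eq_zero_iff W _).mp h

/-- The convolution `dynkin ⋆ id`, which turns out to be the Euler (degree) derivation. -/
noncomputable def euler : TensorAlgebra 𝕜 W →ₗ[𝕜] TensorAlgebra 𝕜 W :=
  LinearMap.mul' 𝕜 _ ∘ₗ TensorProduct.map dynkin LinearMap.id ∘ₗ (unshuffle 𝕜).toLinearMap

theorem mul'_map_dynkin_unshuffle_ι_mul (w : W) (t : TensorAlgebra 𝕜 W ⊗[𝕜] TensorAlgebra 𝕜 W) :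
    LinearMap.mul' 𝕜 _ (TensorProduct.map dynkin LinearMap.id (unshuffle 𝕜 (ι 𝕜 w) * t))
      = ι 𝕜 w * LinearMap.mul' 𝕜 _ (TensorProduct.map dynkin LinearMap.id t)
        + ι 𝕜 w * counitLeft t := by
  induction t with
  | zero => simp
  | tmul y z =>
    simp only [unshuffle_ι, add_mul, Algebra.TensorProduct.tmul_mul_tmul, one_mul, map_add,
      TensorProduct.map_tmul, LinearMap.mul'_apply, LinearMap.id_apply, counitLeft_tmul,
      dynkin_ι_mul, Ring.lie_def, sub_mul, smul_mul_assoc, mul_smul_comm, mul_assoc]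
    abel
  | add t t' ht ht' => simp only [mul_add, map_add, ht, ht']; abel

theorem euler_ι_mul (w : W) (y : TensorAlgebra 𝕜 W) :
    euler (ι 𝕜 w * y) = ι 𝕜 w * euler y + ι 𝕜 w * y := by
  have h := mul'_map_dynkin_unshuffle_ι_mul w (unshuffle 𝕜 y)
  rwa [counitLeft_unshuffle, ← map_mul] at h

@[simp] theorem euler_algebraMap (r : 𝕜) : euler (algebraMap 𝕜 (TensorAlgebra 𝕜 W) r) = 0 := by
  simp [euler]

@[simp] theorem euler_one : euler (1 : TensorAlgebra 𝕜 W) = 0 := by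
  simpa using euler_algebraMap (W := W) (1 : 𝕜)

@[simp] theorem euler_ι (w : W) : euler (ι 𝕜 w) = ι 𝕜 w := by
  simpa using euler_ι_mul w (1 : TensorAlgebra 𝕜 W)

theorem euler_mul (x y : TensorAlgebra 𝕜 W) : euler (x * y) = x * euler y + euler x * y := by
  induction x using TensorAlgebra.induction generalizing y with
  | algebraMap r =>
    rw [euler_algebraMap, zero_mul, add_zero, ← Algebra.smul_def, ← Algebra.smul_def, map_smul]
  | ι w => rw [euler_ι_mul, euler_ι]
  | add x x' hx hx' => simp only [add_mul, map_add, hx, hx']; abel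
  | mul x x' hx hx' => rw [mul_assoc, hx, hx', hx x']; noncomm_ring

noncomputable def eulerDerivation : LieDerivation 𝕜 (TensorAlgebra 𝕜 W) (TensorAlgebra 𝕜 W) where
  toLinearMap := euler
  leibniz' a b := by simp only [Ring.lie_def, map_sub, euler_mul]; abel

theorem euler_of_mem_pow {n : ℕ} {y : TensorAlgebra 𝕜 W}
    (hy : y ∈ LinearMap.range (ι 𝕜 : W →ₗ[𝕜] TensorAlgebra 𝕜 W) ^ n) : euler y = (n : 𝕜) • y := by
  induction hy using Submodule.pow_induction_on_left' with
  | algebraMap r => simp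
  | add a b i _ _ ha hb => rw [map_add, ha, hb, smul_add]
  | mem_mul m hm i z _ ih =>
    obtain ⟨w, rfl⟩ := hm
    rw [euler_ι_mul, ih, mul_smul_comm, Nat.cast_succ, add_smul, one_smul]

theorem euler_eq_dynkin_of_mem_primitives {x : TensorAlgebra 𝕜 W} (hx : x ∈ primitives) :
    euler x = dynkin x := by
  simp [euler, mem_primitives.mp hx]

theorem exists_finset_mem_iSup_eigenspace_euler [CharZero 𝕜] {x : TensorAlgebra 𝕜 W}
    (hx : algebraMapInv x = 0) :
    ∃ s : Finset 𝕜, 0 ∉ s ∧ x ∈ ⨆ μ ∈ s, Module.End.eigenspace (euler (𝕜 := 𝕜) (W := W)) μ := by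
  classical
  set 𝒜 := (LinearMap.range (ι 𝕜 : W →ₗ[𝕜] TensorAlgebra 𝕜 W) ^ ·)
  have h0 : 0 ∉ (DirectSum.decompose 𝒜 x).support := by
    rw [DFinsupp.notMem_support_iff, ← Subtype.coe_inj,
      decompose_zero_eq_algebraMap_algebraMapInv, hx, map_zero, ZeroMemClass.coe_zero]
  refine ⟨(DirectSum.decompose 𝒜 x).support.image (Nat.cast : ℕ → 𝕜), by simpa using h0, ?_⟩
  have hsum : ∑ n ∈ (DirectSum.decompose 𝒜 x).support, (DirectSum.decompose 𝒜 x n : _)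
      ∈ ⨆ μ ∈ (DirectSum.decompose 𝒜 x).support.image (Nat.cast : ℕ → 𝕜),
        Module.End.eigenspace (euler (𝕜 := 𝕜) (W := W)) μ :=
    Submodule.sum_mem _ fun n hn => Submodule.mem_iSup_of_mem (n : 𝕜) <|
      Submodule.mem_iSup_of_mem (Finset.mem_image_of_mem _ hn) <|
        Module.End.mem_eigenspace_iff.mpr (euler_of_mem_pow (DirectSum.decompose 𝒜 x n).2)
  rwa [DirectSum.sum_support_decompose] at hsum

end Field

end TensorAlgebra

open TensorAlgebra in
/-- Friedrichs' criterion: over a field of characteristic zero, the primitive elements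
of the tensor Hopf algebra are exactly the elements of the free Lie algebra, i.e. the
smallest Lie subalgebra of T(V) (with bracket [x,y] = xy - yx) containing V. -/
theorem primitive_iff_lie (x : TensorAlgebra K V) :
    x ∈ LieSubalgebra.lieSpan K (TensorAlgebra K V)
        (Set.range (TensorAlgebra.ι K : V →ₗ[K] TensorAlgebra K V))
      ↔ unshuffle K x
          = x ⊗ₜ[K] (1 : TensorAlgebra K V) + (1 : TensorAlgebra K V) ⊗ₜ[K] x := by
  refine ⟨fun hx => mem_primitives.mp (lieSpan_le_primitives hx), fun hx => ?_⟩
  obtain ⟨s, hs0, hxs⟩ :=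
    exists_finset_mem_iSup_eigenspace_euler (algebraMapInv_eq_zero_of_mem_primitives hx)
  refine Module.End.mem_of_apply_mem_of_mem_iSup_eigenspace
    (eulerDerivation.lieSpan_le_comap (Set.forall_mem_range.mpr fun w => ?_)) hs0 hxs ?_
  · exact LieSubalgebra.subset_lieSpan ⟨w, (euler_ι w).symm⟩
  · change euler x ∈ _
    rw [euler_eq_dynkin_of_mem_primitives hx]
    exact dynkin_mem_lieSpan x
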